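/- Let f₂(x,y) = (3 + 12xy - 42x³y + 30x⁵y + 2y² + 3x²y² - 72x⁴y² + 202x⁶y² - 210x⁸y² + 75x¹⁰y²)/3. Then f₂ = 0 is an invariant algebraic curve of the Abel equation dy/dx = p(x)y² + q(x)y³ with p(x) = 40x⁴ - 30x² + 2 and q(x) = 75x⁹ - 150x⁷ + 88x⁵ - 10x³ - 3x. -/
import Mathlib


open MvPolynomial

noncomputable def x : MvPolynomial (Fin 2) ℝ := X 0
noncomputable def y : MvPolynomial (Fin 2) ℝ := X 1

noncomputable def pP : MvPolynomial (Fin 2) ℝ := 40*x^4 - 30*x^2 + 2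
noncomputable def qP : MvPolynomial (Fin 2) ℝ := 75*x^9 - 150*x^7 + 88*x^5 - 10*x^3 - 3*x

noncomputable def f₂ : MvPolynomial (Fin 2) ℝ :=
  C (1/3 : ℝ) * (3 + 12*x*y - 42*x^3*y + 30*x^5*y + 2*y^2 + 3*x^2*y^2 - 72*x^4*y^2
    + 202*x^6*y^2 - 210*x^8*y^2 + 75*x^10*y^2)

lemma pd_ofNat (i : Fin 2) (n : ℕ) [n.AtLeastTwo] :
    pderiv i (no_index (OfNat.ofNat n) : MvPolynomial (Fin 2) ℝ) = 0 := by
  rw [← map_ofNat (C : ℝ →+* MvPolynomial (Fin 2) ℝ) n, pderiv_C]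

set_option maxHeartbeats 2000000 in
theorem f2_invariant :
    ∃ K : MvPolynomial (Fin 2) ℝ,
      pderiv 0 f₂ + (pP * y^2 + qP * y^3) * pderiv 1 f₂ = K * f₂ := by
  use (4 - 42*x^2 + 50*x^4)*y + (-6*x - 20*x^3 + 176*x^5 - 300*x^7 + 150*x^9)*y^2
  simp only [f₂, pP, qP, x, y]
  simp only [Derivation.leibniz, Derivation.leibniz_pow, map_add, map_sub, pderiv_X_self,
    pderiv_X_of_ne (show (1:Fin 2) ≠ 0 by decide), pderiv_X_of_ne (show (0:Fin 2) ≠ 1 by decide),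
    pderiv_C, pd_ofNat, pderiv_one, smul_eq_mul, nsmul_eq_mul]
  ring
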